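/- Let X := G^{1/2} B with G the (positive definite) Gram matrix of {𝛟_k}, r = rank(X), and singular triples (σ_i, v_i, u_i), i = 1,…,r, of X (σ_i > 0, {v_i} ⊂ ℝ^K and {u_i} ⊂ ℝ^{Ld} orthonormal). Define ψ_i := 𝒫(G^{−1/2} u_i). Then the triples (σ_i, v_i, ψ_i)_{i=1}^r define the multivariate functional singular value decomposition of 𝒳: for every a ∈ ℝ^K, 𝒳(a) = Σ_{i=1}^r σ_i ⟨v_i, a⟩_{ℝ^K} ψ_i, with {v_i} orthonormal in ℝ^K and {ψ_i} orthonormal in ℍ_d^L. -/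

import Mathlib

open MeasureTheory RealInnerProductSpace

noncomputable section

set_option maxHeartbeats 1000000
set_option synthInstance.maxHeartbeats 1000000

/-- `Fsp T` is the Hilbert space `L²(T)` of square-integrable real functions on a
(compact) subset `T ⊆ ℝ^n`. -/
abbrev Fsp {n : ℕ} (T : Set (EuclideanSpace ℝ (Fin n))) : Type :=
  Lp ℝ 2 (volume.restrict T)

variable {p : ℕ} {m : Fin p → ℕ} {T : ∀ j, Set (EuclideanSpace ℝ (Fin (m j)))}
  {d : Fin p → ℕ}

/-- `F_j^{(d)} = sp{ν_i^{(j)}}_{i=1}^{d_j}`, the span of the chosen basis functions of the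
`j`-th variable. -/
abbrev Fd (ν : ∀ j, Fin (d j) → Fsp (T j)) (j : Fin p) : Submodule ℝ (Fsp (T j)) :=
  Submodule.span ℝ (Set.range (ν j))

/-- The square root of a positive semidefinite matrix, as defined in the older Mathlib
(removed since; restored here with its original definition). -/
def Matrix.PosSemidef.sqrt {n : Type*} [Fintype n] [DecidableEq n]
    {A : Matrix n n ℝ} (hA : A.PosSemidef) : Matrix n n ℝ :=
  (hA.1.eigenvectorUnitary : Matrix n n ℝ) * Matrix.diagonal ((↑) ∘ (√·) ∘ hA.1.eigenvalues) *
    (star (hA.1.eigenvectorUnitary : Matrix n n ℝ))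

/-- `ℍ_d = F₁^{(d)} × ⋯ × F_p^{(d)}`. -/
abbrev Hd (ν : ∀ j, Fin (d j) → Fsp (T j)) : Type :=
  PiLp 2 fun j => Fd ν j

/-- The index set `{1, …, d}`, `d = ∑ⱼ dⱼ`, encoded as pairs `q = (j_q, ℓ_q)`. -/
abbrev Idx (d : Fin p → ℕ) : Type := Σ j : Fin p, Fin (d j)

/-- `ν⃗_q ∈ ℍ_d`: the `p`-tuple whose components are all the zero function except the
`j_q`-th one, which equals `ν_{ℓ_q}^{(j_q)}`. -/
def nuVec (ν : ∀ j, Fin (d j) → Fsp (T j)) (q : Idx d) : Hd ν :=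
  WithLp.toLp 2 (Pi.single q.1 ⟨ν q.1 q.2, Submodule.subset_span ⟨q.2, rfl⟩⟩)

/-- `ℍ_d^L`, the Cartesian product of `L` copies of `ℍ_d`. -/
abbrev HdL (L : ℕ) (ν : ∀ j, Fin (d j) → Fsp (T j)) : Type :=
  PiLp 2 fun _ : Fin L => Hd ν

/-- The index set `{1, …, Ld}` encoded as pairs `k = (q_k, r_k)`. -/
abbrev IdxL (d : Fin p → ℕ) (L : ℕ) : Type := Idx d × Fin L

/-- `𝛟_k ∈ ℍ_d^L`: the `L`-tuple whose components are all zero except the `r_k`-th one,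
which equals `ν⃗_{q_k}`. -/
def phiVec (ν : ∀ j, Fin (d j) → Fsp (T j)) (L : ℕ) (k : IdxL d L) : HdL L ν :=
  WithLp.toLp 2 (Pi.single k.2 (nuVec ν k.1))

/-- The linear operator `𝒫 : ℝ^{Ld} → ℍ_d^L`, `𝒫(b) = ∑ᵢ bᵢ 𝛟ᵢ`. -/
def Pop (ν : ∀ j, Fin (d j) → Fsp (T j)) (L : ℕ)
    (b : EuclideanSpace ℝ (IdxL d L)) : HdL L ν :=
  ∑ i : IdxL d L, b i • phiVec ν L i

/-- The multivariate functional lagged vectors `𝐱ₖ = (ŷ_k, …, ŷ_{k+L-1}) ∈ ℍ_d^L`. -/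
def laggedHd (ν : ∀ j, Fin (d j) → Fsp (T j)) {N L K : ℕ} (hK : K + L = N + 1)
    (y : Fin N → Hd ν) (k : Fin K) : HdL L ν :=
  WithLp.toLp 2 (fun i : Fin L => y ⟨k.1 + i.1, by omega⟩)

/-- The trajectory operator `𝒳 : ℝ^K → ℍ_d^L`, `𝒳(a) = ∑ₖ aₖ 𝐱ₖ`. -/
def trajHd (ν : ∀ j, Fin (d j) → Fsp (T j)) {N L K : ℕ} (hK : K + L = N + 1)
    (y : Fin N → Hd ν) (a : EuclideanSpace ℝ (Fin K)) : HdL L ν :=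
  ∑ k : Fin K, a k • laggedHd ν hK y k


section Helpers

open Matrix Finset

lemma eucl_inner_eq_dot {ι : Type*} [Fintype ι] (x y : EuclideanSpace ℝ ι) :
    ⟪x, y⟫ = x ⬝ᵥ y := by
  simp [PiLp.inner_apply, dotProduct, RCLike.inner_apply, mul_comm]

lemma eucl_sum_apply {ι κ : Type*} [DecidableEq κ] (s : Finset κ) (f : κ → EuclideanSpace ℝ ι) (j : ι) :
    (∑ i ∈ s, f i) j = ∑ i ∈ s, f i j := by
  induction s using Finset.induction with
  | empty => rfl
  | insert _ _ h ih => rw [Finset.sum_insert h, Finset.sum_insert h, ← ih]; rfl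

lemma svd_mulVec {ι₁ ι₂ : Type*} [Fintype ι₁] [Fintype ι₂] [DecidableEq ι₂]
    (X : Matrix ι₂ ι₁ ℝ) {r : ℕ} (hr : r = X.rank)
    (σ : Fin r → ℝ) (v : Fin r → (ι₁ → ℝ)) (u : Fin r → (ι₂ → ℝ))
    (hσ : ∀ i, σ i ≠ 0)
    (hvd : ∀ i j, v i ⬝ᵥ v j = if i = j then (1:ℝ) else 0)
    (hli : LinearIndependent ℝ v)
    (hXv : ∀ i, X *ᵥ v i = σ i • u i)
    (hXtu : ∀ i, Xᵀ *ᵥ u i = σ i • v i)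
    (a : ι₁ → ℝ) :
    X *ᵥ a = ∑ i, (σ i * (v i ⬝ᵥ a)) • u i := by
  classical
  have hmem : ∀ i, v i ∈ LinearMap.range Xᵀ.mulVecLin := fun i =>
    ⟨(σ i)⁻¹ • u i, by
      rw [_root_.map_smul, mulVecLin_apply, hXtu, smul_smul, inv_mul_cancel₀ (hσ i), one_smul]⟩
  have hle : Submodule.span ℝ (Set.range v) ≤ LinearMap.range Xᵀ.mulVecLin :=
    Submodule.span_le.2 (Set.range_subset_iff.2 hmem)
  have hfr : Module.finrank ℝ (Submodule.span ℝ (Set.range v))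
      = Module.finrank ℝ (LinearMap.range Xᵀ.mulVecLin) := by
    rw [finrank_span_eq_card hli, Fintype.card_fin]
    have h2 : Module.finrank ℝ (LinearMap.range Xᵀ.mulVecLin) = Xᵀ.rank := rfl
    rw [h2, Matrix.rank_transpose, ← hr]
  have hspan := Submodule.eq_of_le_of_finrank_eq hle hfr
  set P : ι₁ → ℝ := a - ∑ i, (v i ⬝ᵥ a) • v i with hP
  have hPv0 : ∀ j, v j ⬝ᵥ P = 0 := by
    intro j
    rw [hP, dotProduct_sub]
    have hsum : v j ⬝ᵥ (∑ i, (v i ⬝ᵥ a) • v i) = ∑ i, (v i ⬝ᵥ a) * (v j ⬝ᵥ v i) := by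
      simp [dotProduct, Finset.mul_sum]
      rw [Finset.sum_comm]
      refine Finset.sum_congr rfl fun i _ => Finset.sum_congr rfl fun k _ => by ring
    rw [hsum]
    simp [hvd]
  have hPv : ∀ x ∈ Submodule.span ℝ (Set.range v), x ⬝ᵥ P = 0 := by
    intro x hx
    induction hx using Submodule.span_induction with
    | mem x hx => obtain ⟨i, rfl⟩ := hx; exact hPv0 i
    | zero => simp
    | add x y _ _ hx hy => simp [add_dotProduct, hx, hy]
    | smul c x _ hx => simp [smul_dotProduct, hx]
  have hXP : X *ᵥ P = 0 := by
    funext j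
    have hrow : (fun k => X j k) ∈ Submodule.span ℝ (Set.range v) := by
      rw [hspan]
      exact ⟨Pi.single j 1, by
        rw [mulVecLin_apply, mulVec_single]; funext k; simp [Matrix.transpose_apply]⟩
    have h0 := hPv _ hrow
    simpa [Matrix.mulVec, dotProduct] using h0
  have ha : a = P + ∑ i, (v i ⬝ᵥ a) • v i := by rw [hP, sub_add_cancel]
  calc X *ᵥ a = X *ᵥ (P + ∑ i, (v i ⬝ᵥ a) • v i) := by rw [← ha]
    _ = X *ᵥ P + ∑ i, (v i ⬝ᵥ a) • (X *ᵥ v i) := by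
        rw [Matrix.mulVec_add]
        congr 1
        show X.mulVecLin (∑ i, (v i ⬝ᵥ a) • v i) = _
        rw [map_sum]
        exact Finset.sum_congr rfl fun i _ => by rw [_root_.map_smul, mulVecLin_apply]
    _ = ∑ i, (σ i * (v i ⬝ᵥ a)) • u i := by
        rw [hXP, zero_add]
        exact Finset.sum_congr rfl fun i _ => by rw [hXv, smul_smul, mul_comm]

lemma psd_sqrt_transpose {n : Type*} [Fintype n] [DecidableEq n]
    {A : Matrix n n ℝ} (hA : A.PosSemidef) : (hA.sqrt)ᵀ = hA.sqrt := by
  simp [Matrix.PosSemidef.sqrt, Matrix.transpose_mul, Matrix.star_eq_conjTranspose,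
    Matrix.conjTranspose_eq_transpose_of_trivial, Matrix.mul_assoc]

lemma psd_sqrt_mul_self {n : Type*} [Fintype n] [DecidableEq n]
    {A : Matrix n n ℝ} (hA : A.PosSemidef) : hA.sqrt * hA.sqrt = A := by
  have hU : star (hA.1.eigenvectorUnitary : Matrix n n ℝ) * (hA.1.eigenvectorUnitary : Matrix n n ℝ) = 1 :=
    Unitary.coe_star_mul_self _
  have hD : Matrix.diagonal ((↑) ∘ (√·) ∘ hA.1.eigenvalues) *
      Matrix.diagonal ((↑) ∘ (√·) ∘ hA.1.eigenvalues) =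
      Matrix.diagonal (RCLike.ofReal ∘ hA.1.eigenvalues : n → ℝ) := by
    rw [Matrix.diagonal_mul_diagonal]
    congr 1
    funext i
    simp [Real.mul_self_sqrt (hA.eigenvalues_nonneg i)]
  conv_rhs => rw [hA.1.spectral_theorem, Unitary.conjStarAlgAut_apply]
  unfold Matrix.PosSemidef.sqrt
  simp only [Matrix.mul_assoc]
  rw [← Matrix.mul_assoc (star _), hU, Matrix.one_mul, ← Matrix.mul_assoc (Matrix.diagonal _), hD]

lemma Pop_sum_smul {p : ℕ} {m : Fin p → ℕ} {T : ∀ j, Set (EuclideanSpace ℝ (Fin (m j)))}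
    {d : Fin p → ℕ} (ν : ∀ j, Fin (d j) → Fsp (T j)) (L : ℕ)
    {κ : Type*} [Fintype κ] [DecidableEq κ] (c : κ → ℝ) (w : κ → EuclideanSpace ℝ (IdxL d L)) :
    Pop ν L (∑ i, c i • w i) = ∑ i, c i • Pop ν L (w i) := by
  unfold Pop
  have h1 : ∀ j : IdxL d L, (∑ i : κ, c i • w i) j = ∑ i : κ, c i * w i j := by
    intro j; rw [eucl_sum_apply]; rfl
  simp only [h1, Finset.sum_smul, Finset.smul_sum, smul_smul]
  exact Finset.sum_comm

end Helpers

open Matrix in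
private theorem _dummy : True := trivial

open Matrix

/-- **Statement 10.** Let `X = G^{1/2} B` with `G` the (positive definite) Gram matrix of
the basis `{𝛟ₖ}`, and let `(σᵢ, vᵢ, uᵢ)` be a singular triple of `X`, i.e.
`X vᵢ = σᵢ uᵢ`, `Xᵀ uᵢ = σᵢ vᵢ`, `σᵢ > 0`, with orthonormal families `{vᵢ} ⊆ ℝ^K`,
`{uᵢ} ⊆ ℝ^{Ld}`. Define `ψᵢ = 𝒫(G^{-1/2} uᵢ)`, with `r = rank X`. Then the triples `(σᵢ, vᵢ, ψᵢ)_{i=1}^r`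
define the multivariate functional SVD of `𝒳`: for every `a ∈ ℝ^K`,
`𝒳(a) = ∑ᵢ σᵢ ⟨vᵢ, a⟩ ψᵢ`, with `{vᵢ}` orthonormal in `ℝ^K` and `{ψᵢ}` orthonormal in
`ℍ_d^L`. -/
theorem recipe_defines_multivariate_functional_svd
    {p : ℕ} {m : Fin p → ℕ} {T : ∀ j, Set (EuclideanSpace ℝ (Fin (m j)))}
    (hT : ∀ j, IsCompact (T j)) {d : Fin p → ℕ}
    (ν : ∀ j, Fin (d j) → Fsp (T j)) (hν : ∀ j, LinearIndependent ℝ (ν j))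
    {N L K : ℕ} (hL : 0 < L) (hLN : 2 * L < N) (hK : K + L = N + 1)
    (y : Fin N → Hd ν)
    (b : Fin K → EuclideanSpace ℝ (IdxL d L))
    (hb : ∀ k : Fin K, laggedHd ν hK y k = Pop ν L (b k))
    (G : Matrix (IdxL d L) (IdxL d L) ℝ)
    (hGdef : G = Matrix.of fun i i' : IdxL d L => ⟪phiVec ν L i, phiVec ν L i'⟫)
    (hG : G.PosDef)
    (X : Matrix (IdxL d L) (Fin K) ℝ)
    (hX : X = hG.posSemidef.sqrt * Matrix.of (fun i (k : Fin K) => b k i))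
    (r : ℕ) (hr : r = X.rank) (σ : Fin r → ℝ) (v : Fin r → EuclideanSpace ℝ (Fin K))
    (u : Fin r → EuclideanSpace ℝ (IdxL d L))
    (hσ : ∀ i, 0 < σ i) (hv : Orthonormal ℝ v) (hu : Orthonormal ℝ u)
    (hXv : ∀ i, X.mulVec (v i) = σ i • u i)
    (hXtu : ∀ i, X.transpose.mulVec (u i) = σ i • v i)
    (ψ : Fin r → HdL L ν)
    (hψ : ∀ i, ψ i = Pop ν L (WithLp.toLp 2 ((hG.posSemidef.sqrt)⁻¹.mulVec (u i))))
    :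
    (∀ a : EuclideanSpace ℝ (Fin K),
        trajHd ν hK y a = ∑ i : Fin r, (σ i * ⟪v i, a⟫) • ψ i)
      ∧ Orthonormal ℝ v ∧ Orthonormal ℝ ψ := by
  classical
  have hvd : ∀ i j, v i ⬝ᵥ v j = if i = j then (1:ℝ) else 0 := by
    intro i j
    rw [← eucl_inner_eq_dot]
    exact orthonormal_iff_ite.1 hv i j
  have hud : ∀ i j, u i ⬝ᵥ u j = if i = j then (1:ℝ) else 0 := by
    intro i j
    rw [← eucl_inner_eq_dot]
    exact orthonormal_iff_ite.1 hu i j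
  set S := hG.posSemidef.sqrt with hSdef
  have hSsym : Sᵀ = S := psd_sqrt_transpose hG.posSemidef
  have hSS : S * S = G := psd_sqrt_mul_self hG.posSemidef
  have hdet : IsUnit S.det := by
    rw [isUnit_iff_ne_zero]
    intro h0
    have hGd : G.det = 0 := by rw [← hSS, Matrix.det_mul, h0, mul_zero]
    exact hG.det_pos.ne' hGd
  have hGinner : ∀ b₁ b₂ : EuclideanSpace ℝ (IdxL d L),
      ⟪Pop ν L b₁, Pop ν L b₂⟫ = b₁ ⬝ᵥ (G *ᵥ b₂) := by
    intro b₁ b₂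
    unfold Pop
    rw [sum_inner]
    have hrhs : b₁ ⬝ᵥ (G *ᵥ b₂)
        = ∑ i : IdxL d L, ∑ j : IdxL d L, b₁ i * (G i j * b₂ j) := by
      simp [dotProduct, Matrix.mulVec, Finset.mul_sum]
    rw [hrhs]
    refine Finset.sum_congr rfl fun i _ => ?_
    rw [inner_sum]
    refine Finset.sum_congr rfl fun j _ => ?_
    rw [real_inner_smul_left (F := HdL L ν), real_inner_smul_right (F := HdL L ν), hGdef]
    simp only [Matrix.of_apply]
    ring
  have hvecMulS : ∀ x : IdxL d L → ℝ, x ᵥ* S = S *ᵥ x := by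
    intro x
    conv_lhs => rw [← hSsym]
    rw [Matrix.vecMul_transpose]
  have hψinner : ∀ i j, ⟪ψ i, ψ j⟫ = u i ⬝ᵥ u j := by
    intro i j
    rw [hψ i, hψ j, hGinner]
    simp only [WithLp.ofLp_toLp]
    have h1 : G *ᵥ (S⁻¹ *ᵥ u j) = S *ᵥ u j := by
      rw [Matrix.mulVec_mulVec]
      congr 1
      rw [← hSS, Matrix.mul_assoc, Matrix.mul_nonsing_inv _ hdet, Matrix.mul_one]
    rw [h1, Matrix.dotProduct_mulVec, hvecMulS, Matrix.mulVec_mulVec,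
      Matrix.mul_nonsing_inv _ hdet, Matrix.one_mulVec]
  have hψon : Orthonormal ℝ ψ := by
    rw [orthonormal_iff_ite]
    intro i j
    rw [hψinner i j, hud i j]
  refine ⟨?_, hv, hψon⟩
  intro a
  set B : Matrix (IdxL d L) (Fin K) ℝ := Matrix.of (fun i (k : Fin K) => b k i) with hBdef
  have hBa : WithLp.toLp 2 (B *ᵥ a) = (∑ k, a k • b k : EuclideanSpace ℝ (IdxL d L)) := by
    ext i
    rw [eucl_sum_apply]
    simp [Matrix.mulVec, dotProduct, hBdef, mul_comm]
  have htraj : trajHd ν hK y a = Pop ν L (WithLp.toLp 2 (B *ᵥ a)) := by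
    rw [hBa, Pop_sum_smul]
    unfold trajHd
    exact Finset.sum_congr rfl fun k _ => by rw [hb k]
  have hXa : X *ᵥ a = S *ᵥ (B *ᵥ a) := by
    rw [hX, ← Matrix.mulVec_mulVec]
  have hBa2 : B *ᵥ a = S⁻¹ *ᵥ (X *ᵥ a) := by
    rw [hXa, Matrix.mulVec_mulVec, Matrix.nonsing_inv_mul _ hdet, Matrix.one_mulVec]
  have hcore : X *ᵥ a = ∑ i, (σ i * (v i ⬝ᵥ a)) • (u i).ofLp :=
    svd_mulVec X hr σ (fun i => (v i).ofLp) (fun i => (u i).ofLp) (fun i => ne_of_gt (hσ i)) hvd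
      (hv.linearIndependent.map' (WithLp.linearEquiv 2 ℝ (Fin K → ℝ)).toLinearMap (LinearEquiv.ker _))
      hXv hXtu a
  have hmain0 : S⁻¹ *ᵥ (X *ᵥ a)
      = (∑ i, (σ i * (v i ⬝ᵥ a)) • (S⁻¹ *ᵥ u i)) := by
    rw [hcore]
    show (S⁻¹).mulVecLin _ = _
    rw [map_sum]
    exact Finset.sum_congr rfl fun i _ => by rw [_root_.map_smul, Matrix.mulVecLin_apply]
  have hmain : WithLp.toLp 2 (S⁻¹ *ᵥ (X *ᵥ a))
      = (∑ i, (σ i * (v i ⬝ᵥ a)) • WithLp.toLp 2 (S⁻¹ *ᵥ u i) : EuclideanSpace ℝ (IdxL d L)) := by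
    rw [hmain0]
    ext j
    simp [eucl_sum_apply, Finset.sum_apply]
  rw [htraj, hBa2, hmain, Pop_sum_smul]
  refine Finset.sum_congr rfl fun i _ => ?_
  rw [hψ i, eucl_inner_eq_dot]
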